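/- Under the su(N) generator hypotheses, the Dirac matrices in the Dirac representation, and the Grassmann setup, the tensor Fierz identity for U(N) fermions holds: Σ_{a : Fin (N^2−1)} Σ_{μ,ν} ε μ · ε ν • ⟪σ μ ν, T a⟫ * ⟪σ μ ν, T a⟫ = −(3/2) • ⟪1⟫ * ⟪1⟫ + ((N−2)/(4·N)) • Σ_{μ,ν} ε μ · ε ν • ⟪σ μ ν⟫ * ⟪σ μ ν⟫ − (3/2) • ⟪γ5⟫ * ⟪γ5⟫, where μ, ν range over Fin 4. -/

import Mathlib

/-!
Both sides are four-fermion operators `∑ c_{ABCD} x_{ijkl} ψ̄_{Ai} ψ_{Bj} ψ̄_{Ck} ψ_{Dl}`,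
bilinear in a Dirac tensor `c` and a colour tensor `x`. The su(N) completeness relation
`∑ₐ T^a_{ij} T^a_{kl} = ½ δ_{il} δ_{jk} - (1/2N) δ_{ij} δ_{kl}` turns the colour tensor of the
left side into colour singlets, one of them with `j` and `l` exchanged. Anticommuting `ψ_{Bj}`
past `ψ_{Dl}` moves that exchange onto the Dirac indices, at the cost of a sign, and the Fierz
identity `σ^{μν}_{AD} σ_{μν,CB} = 3 δ_{AB} δ_{CD} - ½ σ^{μν}_{AB} σ_{μν,CD} + 3 γ5_{AB} γ5_{CD}`
(a finite computation, checked over the Gaussian integers) expresses the result in the Dirac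
structures of the right side.
-/

noncomputable section

open Complex Matrix

/-- The Dirac γ-matrices in the Dirac representation. -/
def γm : Fin 4 → Matrix (Fin 4) (Fin 4) ℂ :=
  ![!![1,0,0,0; 0,1,0,0; 0,0,-1,0; 0,0,0,-1],
    !![0,0,0,1; 0,0,1,0; 0,-1,0,0; -1,0,0,0],
    !![0,0,0,-I; 0,0,I,0; 0,I,0,0; -I,0,0,0],
    !![0,0,1,0; 0,0,0,-1; -1,0,0,0; 0,1,0,0]]

/-- γ⁵ = i·γ⁰γ¹γ²γ³. -/
def γ5 : Matrix (Fin 4) (Fin 4) ℂ := I • (γm 0 * γm 1 * γm 2 * γm 3)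

/-- σ^{μν} = (i/2)[γ^μ, γ^ν]. -/
def σm (μ ν : Fin 4) : Matrix (Fin 4) (Fin 4) ℂ := (I / 2) • (γm μ * γm ν - γm ν * γm μ)

/-- The metric signs ε 0 = 1, ε 1 = ε 2 = ε 3 = −1 used to raise/lower indices. -/
def εs : Fin 4 → ℤ := ![1, -1, -1, -1]

/-- The totally antisymmetric Levi-Civita symbol on four indices,
normalized by ε₄ 0 1 2 3 = 1. -/
def ε4 (κ l μ ν : Fin 4) : ℤ :=
  Matrix.det (Matrix.of fun p q : Fin 4 => if ![κ, l, μ, ν] p = q then (1 : ℤ) else 0)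

/-- The Grassmann algebra generated by the 8N fermion components:
the exterior algebra of the direct sum of two copies of (Fin 4 × Fin N) → ℂ. -/
abbrev GrassAlg (N : ℕ) :=
  ExteriorAlgebra ℂ (((Fin 4 × Fin N) → ℂ) × ((Fin 4 × Fin N) → ℂ))

/-- ψ (A, i): the image in the Grassmann algebra of the standard basis vector
of the first summand indexed by (A, i). -/
def ψv (N : ℕ) (A : Fin 4) (i : Fin N) : GrassAlg N :=
  ExteriorAlgebra.ι ℂ (Pi.single (A, i) 1, 0)

/-- ψ̄ (A, i): the image in the Grassmann algebra of the standard basis vector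
of the second summand indexed by (A, i). -/
def ψbar (N : ℕ) (A : Fin 4) (i : Fin N) : GrassAlg N :=
  ExteriorAlgebra.ι ℂ (0, Pi.single (A, i) 1)

/-- The fermion bilinear B Γ i j = ∑_{A,B} Γ A B · ψ̄ (A,i) ψ (B,j). -/
def Bgr (N : ℕ) (Γ : Matrix (Fin 4) (Fin 4) ℂ) (i j : Fin N) : GrassAlg N :=
  ∑ A : Fin 4, ∑ B : Fin 4, Γ A B • (ψbar N A i * ψv N B j)

/-- ⟪Γ, X⟫ = ∑_{i,j} X i j · B Γ i j, the bilinear with Dirac structure Γ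
and color structure X. -/
def pairing (N : ℕ) (Γ : Matrix (Fin 4) (Fin 4) ℂ)
    (X : Matrix (Fin N) (Fin N) ℂ) : GrassAlg N :=
  ∑ i : Fin N, ∑ j : Fin N, X i j • Bgr N Γ i j

/-- ⟪Γ⟫ = ⟪Γ, 1⟫, the color-singlet bilinear. -/
def sing (N : ℕ) (Γ : Matrix (Fin 4) (Fin 4) ℂ) : GrassAlg N := pairing N Γ 1

theorem ExteriorAlgebra.ι_mul_ι_mul_ι_mul_ι_swap {R M : Type*} [CommRing R] [AddCommGroup M]
    [Module R M] (u₁ u₂ u₃ u₄ : M) :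
    ι R u₁ * ι R u₂ * (ι R u₃ * ι R u₄) = -(ι R u₁ * ι R u₄ * (ι R u₃ * ι R u₂)) := by
  have swap (u v : M) : ι R u * ι R v = -(ι R v * ι R u) :=
    eq_neg_of_add_eq_zero_left (ι_add_mul_swap u v)
  calc ι R u₁ * ι R u₂ * (ι R u₃ * ι R u₄) = ι R u₁ * (ι R u₂ * ι R u₃) * ι R u₄ := by
        noncomm_ring
    _ = -(ι R u₁ * ι R u₃ * (ι R u₂ * ι R u₄)) := by rw [swap u₂ u₃]; noncomm_ring
    _ = ι R u₁ * (ι R u₃ * ι R u₄) * ι R u₂ := by rw [swap u₂ u₄]; noncomm_ring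
    _ = -(ι R u₁ * ι R u₄ * (ι R u₃ * ι R u₂)) := by rw [swap u₃ u₄]; noncomm_ring

theorem Matrix.sum_apply_mul_apply_of_trace_mul_eq_ite {ι n R : Type*} [Fintype ι]
    [DecidableEq ι] [Fintype n] [DecidableEq n] [CommRing R]
    (hcard : Fintype.card ι = Fintype.card n ^ 2) (S S' : ι → Matrix n n R)
    (h : ∀ x y, (S x * S' y).trace = if x = y then 1 else 0) (i j k l : n) :
    ∑ x, S' x j i * S x k l = (1 : Matrix n n R) i k * (1 : Matrix n n R) j l := by
  let A : Matrix ι (n × n) R := Matrix.of fun x p => S x p.1 p.2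
  let B : Matrix (n × n) ι R := Matrix.of fun p y => S' y p.2 p.1
  have hAB : A * B = 1 := by
    ext x y
    rw [Matrix.one_apply, ← h, Matrix.trace, Matrix.mul_apply, Fintype.sum_prod_type]
    rfl
  have hBA : B * A = 1 :=
    (Matrix.mul_eq_one_comm_of_card_eq ι (n × n) R (by rw [hcard, Fintype.card_prod, sq])).mp hAB
  calc ∑ x, S' x j i * S x k l = (B * A) (i, j) (k, l) := by rw [Matrix.mul_apply]; rfl
    _ = _ := by simp only [hBA, Matrix.one_apply, Prod.mk.injEq, ite_zero_mul_ite_zero, mul_one]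

def tensor4 {n R : Type*} [Mul R] (X Y : Matrix n n R) : (n × n) × (n × n) → R :=
  fun p => X p.1.1 p.1.2 * Y p.2.1 p.2.2

def exchange {n : Type*} (p : (n × n) × (n × n)) : (n × n) × (n × n) :=
  ((p.1.1, p.2.2), (p.2.1, p.1.2))

theorem tensor4_apply {n R : Type*} [Mul R] (X Y : Matrix n n R) (i j k l : n) :
    tensor4 X Y ((i, j), (k, l)) = X i j * Y k l := rfl

theorem exchange_apply {n : Type*} (i j k l : n) :
    exchange ((i, j), (k, l)) = ((i, l), (k, j)) := rfl

theorem exchange_involutive {n : Type*} : Function.Involutive (exchange (n := n)) :=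
  fun _ => rfl

theorem sum_tensor4_self_of_trace_orthonormal {ι n K : Type*} [Fintype ι] [DecidableEq ι]
    [Fintype n] [DecidableEq n] [Field K] [CharZero K]
    (hcard : Fintype.card ι + 1 = Fintype.card n ^ 2) (T : ι → Matrix n n K)
    (htr : ∀ a, (T a).trace = 0)
    (horth : ∀ a b, (T a * T b).trace = if a = b then (1 / 2 : K) else 0) :
    ∑ a, tensor4 (T a) (T a) =
      (1 / 2 : K) • (tensor4 1 1 ∘ exchange) - (1 / (2 * Fintype.card n) : K) • tensor4 1 1 := by
  have hn : (Fintype.card n : K) ≠ 0 := by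
    rw [Nat.cast_ne_zero]; rintro h; simp [h] at hcard
  -- `(T a, 1)` and `(2 T a, 1 / n)` are dual bases of the matrices under `(X, Y) ↦ tr (X Y)`.
  let S : ι ⊕ Unit → Matrix n n K := Sum.elim T fun _ => 1
  let S' : ι ⊕ Unit → Matrix n n K :=
    Sum.elim (fun a => (2 : K) • T a) fun _ => (Fintype.card n : K)⁻¹ • 1
  have hdual : ∀ x y, (S x * S' y).trace = if x = y then 1 else 0 := by
    rintro (a | _) (b | _) <;> simp [S, S', horth, htr, hn]
  have hcard' : Fintype.card (ι ⊕ Unit) = Fintype.card n ^ 2 := by simpa using hcard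
  funext ⟨⟨i, j⟩, ⟨k, l⟩⟩
  have key := Matrix.sum_apply_mul_apply_of_trace_mul_eq_ite hcard' S S' hdual j i k l
  simp only [Fintype.sum_sum_type, S, S', Sum.elim_inl, Sum.elim_inr, Matrix.smul_apply,
    smul_eq_mul, Finset.univ_unique, Finset.sum_singleton, mul_assoc, ← Finset.mul_sum] at key
  simp only [Finset.sum_apply, tensor4_apply, exchange_apply, Pi.sub_apply, Pi.smul_apply,
    Function.comp_apply, smul_eq_mul, Matrix.isSymm_one.apply j k]
  linear_combination key / 2

def fermionMonomial (N : ℕ) (d : (Fin 4 × Fin 4) × (Fin 4 × Fin 4))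
    (q : (Fin N × Fin N) × (Fin N × Fin N)) : GrassAlg N :=
  ψbar N d.1.1 q.1.1 * ψv N d.1.2 q.1.2 * (ψbar N d.2.1 q.2.1 * ψv N d.2.2 q.2.2)

theorem fermionMonomial_exchange (N : ℕ) (d : (Fin 4 × Fin 4) × (Fin 4 × Fin 4))
    (q : (Fin N × Fin N) × (Fin N × Fin N)) :
    fermionMonomial N (exchange d) (exchange q) = -fermionMonomial N d q :=
  ExteriorAlgebra.ι_mul_ι_mul_ι_mul_ι_swap _ _ _ _

def fourFermion (N : ℕ) :
    ((Fin 4 × Fin 4) × (Fin 4 × Fin 4) → ℂ) →ₗ[ℂ]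
      ((Fin N × Fin N) × (Fin N × Fin N) → ℂ) →ₗ[ℂ] GrassAlg N :=
  LinearMap.mk₂ ℂ (fun c x => ∑ q, ∑ d, (x q * c d) • fermionMonomial N d q)
    (by intros; simp only [Pi.add_apply, mul_add, add_smul, Finset.sum_add_distrib])
    (by intros; simp only [Pi.smul_apply, smul_eq_mul, mul_left_comm, mul_smul, Finset.smul_sum])
    (by intros; simp only [Pi.add_apply, add_mul, add_smul, Finset.sum_add_distrib])
    (by intros; simp only [Pi.smul_apply, smul_eq_mul, mul_assoc, mul_smul, Finset.smul_sum])

theorem fourFermion_apply (N : ℕ) (c : (Fin 4 × Fin 4) × (Fin 4 × Fin 4) → ℂ)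
    (x : (Fin N × Fin N) × (Fin N × Fin N) → ℂ) :
    fourFermion N c x = ∑ q, ∑ d, (x q * c d) • fermionMonomial N d q :=
  rfl

theorem fourFermion_comp_exchange (N : ℕ) (c : (Fin 4 × Fin 4) × (Fin 4 × Fin 4) → ℂ)
    (x : (Fin N × Fin N) × (Fin N × Fin N) → ℂ) :
    fourFermion N c (x ∘ exchange) = -fourFermion N (c ∘ exchange) x := by
  rw [fourFermion_apply, fourFermion_apply, ← Equiv.sum_comp (exchange_involutive.toPerm _)]
  simp only [Function.comp_apply, Function.Involutive.coe_toPerm, exchange_involutive _]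
  rw [← Finset.sum_neg_distrib]
  refine Finset.sum_congr rfl fun q _ => ?_
  rw [← Equiv.sum_comp (exchange_involutive.toPerm _), ← Finset.sum_neg_distrib]
  refine Finset.sum_congr rfl fun d _ => ?_
  simp only [Function.Involutive.coe_toPerm, fermionMonomial_exchange, smul_neg]

theorem pairing_eq_sum (N : ℕ) (Γ : Matrix (Fin 4) (Fin 4) ℂ) (X : Matrix (Fin N) (Fin N) ℂ) :
    pairing N Γ X = ∑ q : Fin N × Fin N, ∑ d : Fin 4 × Fin 4,
      (X q.1 q.2 * Γ d.1 d.2) • (ψbar N d.1 q.1 * ψv N d.2 q.2) := by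
  simp only [pairing, Bgr, Fintype.sum_prod_type, Finset.smul_sum, smul_smul]

theorem pairing_mul_pairing (N : ℕ) (Γ Δ : Matrix (Fin 4) (Fin 4) ℂ)
    (X Y : Matrix (Fin N) (Fin N) ℂ) :
    pairing N Γ X * pairing N Δ Y = fourFermion N (tensor4 Γ Δ) (tensor4 X Y) := by
  rw [pairing_eq_sum, pairing_eq_sum, Finset.sum_mul_sum, fourFermion_apply]
  conv_rhs => rw [Fintype.sum_prod_type]
  refine Finset.sum_congr rfl fun q₁ _ => Finset.sum_congr rfl fun q₂ _ => ?_
  rw [Finset.sum_mul_sum]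
  conv_rhs => rw [Fintype.sum_prod_type]
  refine Finset.sum_congr rfl fun d₁ _ => Finset.sum_congr rfl fun d₂ _ => ?_
  rw [smul_mul_smul, mul_mul_mul_comm]
  rfl

section DiracFierz

open GaussianInt

def γGauss : Fin 4 → Matrix (Fin 4) (Fin 4) GaussianInt :=
  ![!![1,0,0,0; 0,1,0,0; 0,0,-1,0; 0,0,0,-1],
    !![0,0,0,1; 0,0,1,0; 0,-1,0,0; -1,0,0,0],
    !![0,0,0,-Zsqrtd.sqrtd; 0,0,Zsqrtd.sqrtd,0; 0,Zsqrtd.sqrtd,0,0; -Zsqrtd.sqrtd,0,0,0],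
    !![0,0,1,0; 0,0,0,-1; -1,0,0,0; 0,1,0,0]]

def commGauss (μ ν : Fin 4) : Matrix (Fin 4) (Fin 4) GaussianInt :=
  γGauss μ * γGauss ν - γGauss ν * γGauss μ

def γ0123Gauss : Matrix (Fin 4) (Fin 4) GaussianInt :=
  γGauss 0 * γGauss 1 * γGauss 2 * γGauss 3

def σContractionGauss (A B C D : Fin 4) : GaussianInt :=
  ∑ μ, ∑ ν, (εs μ * εs ν : ℤ) * (commGauss μ ν A B * commGauss μ ν C D)

/- The Fierz identity for `σ ⊗ σ` times `-8`, written with `σ = (i/2) [γ, γ]` and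
`γ5 = i γ⁰γ¹γ²γ³` so that all entries are Gaussian integers and `decide` applies. -/
theorem σContractionGauss_exchange : ∀ A B C D : Fin 4,
    2 * σContractionGauss A D C B =
      -24 * ((1 : Matrix (Fin 4) (Fin 4) GaussianInt) A B * (1 : Matrix _ _ GaussianInt) C D)
        - σContractionGauss A B C D + 24 * (γ0123Gauss A B * γ0123Gauss C D) := by
  decide

theorem map_γGauss (μ : Fin 4) : (γGauss μ).map toComplex = γm μ := by
  fin_cases μ <;> ext A B <;> fin_cases A <;> fin_cases B <;> simp [γGauss, γm, toComplex_def]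

theorem σm_eq_map (μ ν : Fin 4) : σm μ ν = (I / 2) • (commGauss μ ν).map toComplex := by
  simp [σm, commGauss, Matrix.map_sub, Matrix.map_mul, map_γGauss]

theorem γ5_eq_map : γ5 = I • γ0123Gauss.map toComplex := by
  simp [γ5, γ0123Gauss, Matrix.map_mul, map_γGauss]

def σContraction : (Fin 4 × Fin 4) × (Fin 4 × Fin 4) → ℂ :=
  ∑ μ, ∑ ν, ((εs μ : ℂ) * εs ν) • tensor4 (σm μ ν) (σm μ ν)

theorem σContraction_apply (A B C D : Fin 4) :
    σContraction ((A, B), (C, D)) = -(1 / 4) * toComplex (σContractionGauss A B C D) := by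
  simp only [σContraction, σContractionGauss, Finset.sum_apply, Pi.smul_apply, tensor4_apply,
    σm_eq_map, Matrix.smul_apply, Matrix.map_apply, smul_eq_mul, map_sum, map_mul, map_intCast,
    Int.cast_mul, Finset.mul_sum]
  refine Finset.sum_congr rfl fun μ _ => Finset.sum_congr rfl fun ν _ => ?_
  linear_combination (1 / 4 * (εs μ * εs ν : ℂ) * toComplex (commGauss μ ν A B) *
    toComplex (commGauss μ ν C D)) * I_sq

theorem σContraction_comp_exchange :
    σContraction ∘ exchange =
      (3 : ℂ) • tensor4 1 1 - (1 / 2 : ℂ) • σContraction + (3 : ℂ) • tensor4 γ5 γ5 := by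
  funext ⟨⟨A, B⟩, ⟨C, D⟩⟩
  have h := congrArg toComplex (σContractionGauss_exchange A B C D)
  simp only [map_mul, map_sub, map_add, map_neg, map_ofNat, Matrix.one_apply, apply_ite toComplex,
    map_one, map_zero] at h
  simp only [Function.comp_apply, exchange_apply, Pi.add_apply, Pi.sub_apply, Pi.smul_apply,
    tensor4_apply, σContraction_apply, γ5_eq_map, Matrix.smul_apply, Matrix.map_apply,
    Matrix.one_apply, smul_eq_mul]
  linear_combination (-1 / 8) * h +
    (-3 * toComplex (γ0123Gauss A B) * toComplex (γ0123Gauss C D)) * I_sq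

end DiracFierz

theorem fierz_tensor_general (N : ℕ) (hN : 2 ≤ N)
    (T : Fin (N ^ 2 - 1) → Matrix (Fin N) (Fin N) ℂ)
    (htr : ∀ a, (T a).trace = 0)
    (horth : ∀ a b, (T a * T b).trace = if a = b then (1 / 2 : ℂ) else 0) :
    ∑ a, ∑ μ, ∑ ν, ((εs μ : ℂ) * (εs ν : ℂ)) •
        (pairing N (σm μ ν) (T a) * pairing N (σm μ ν) (T a)) =
      (-(3 / 2) : ℂ) • (sing N 1 * sing N 1)
        + (((N : ℂ) - 2) / (4 * (N : ℂ))) • ∑ μ, ∑ ν, ((εs μ : ℂ) * (εs ν : ℂ)) •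
            (sing N (σm μ ν) * sing N (σm μ ν))
        - (3 / 2 : ℂ) • (sing N γ5 * sing N γ5) := by
  have hcard : Fintype.card (Fin (N ^ 2 - 1)) + 1 = Fintype.card (Fin N) ^ 2 := by
    have := Nat.one_le_pow 2 N (by omega)
    simp only [Fintype.card_fin]; omega
  have hcompl := sum_tensor4_self_of_trace_orthonormal hcard T htr horth
  rw [Fintype.card_fin] at hcompl
  have hN0 : (N : ℂ) ≠ 0 := by exact_mod_cast (by omega : N ≠ 0)
  have hcoeff : ((N : ℂ) - 2) / (4 * N) = 1 / 4 - 1 / (2 * N) := by field_simp; ring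
  calc _ = fourFermion N σContraction (∑ a, tensor4 (T a) (T a)) := by
        simp only [pairing_mul_pairing, σContraction, map_sum, map_smul, LinearMap.sum_apply,
          LinearMap.smul_apply]
    _ = fourFermion N
          ((-(1 / 2) : ℂ) • (σContraction ∘ exchange) - (1 / (2 * N) : ℂ) • σContraction)
          (tensor4 1 1) := by
        rw [hcompl, map_sub, map_smul, map_smul, fourFermion_comp_exchange]
        simp only [map_sub, map_smul, LinearMap.sub_apply, LinearMap.smul_apply]
        module
    _ = _ := by
        rw [σContraction_comp_exchange, hcoeff]
        simp only [sing, pairing_mul_pairing, σContraction, map_add, map_sub, map_smul, map_sum,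
          LinearMap.add_apply, LinearMap.sub_apply, LinearMap.smul_apply, LinearMap.sum_apply]
        module

/-- **Tensor Fierz identity for U(N) fermions.** -/
theorem fierz_tensor (N : ℕ) (hN : 2 ≤ N)
    (T : Fin (N ^ 2 - 1) → Matrix (Fin N) (Fin N) ℂ)
    (htr : ∀ a, (T a).trace = 0)
    (hherm : ∀ a, (T a)ᴴ = T a)
    (horth : ∀ a b, (T a * T b).trace = if a = b then (1 / 2 : ℂ) else 0) :
    ∑ a, ∑ μ, ∑ ν, ((εs μ : ℂ) * (εs ν : ℂ)) •
        (pairing N (σm μ ν) (T a) * pairing N (σm μ ν) (T a)) =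
      (-(3 / 2) : ℂ) • (sing N 1 * sing N 1)
        + (((N : ℂ) - 2) / (4 * (N : ℂ))) • ∑ μ, ∑ ν, ((εs μ : ℂ) * (εs ν : ℂ)) •
            (sing N (σm μ ν) * sing N (σm μ ν))
        - (3 / 2 : ℂ) • (sing N γ5 * sing N γ5) :=
  fierz_tensor_general N hN T htr horth
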